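/- For every a ∈ [0,1), every x in the open unit ball B ⊂ ℝ^n (n ≥ 2) and every y ∈ ℝ^n, one has (1/(1+a))² h_K^*(x;y) ≤ F_a^*(x,y)² ≤ (1/(1−a))² h_K^*(x;y), where h_K^*(x;y) = (1−|x|²)(|y|² − ⟨x,y⟩²) is the Klein co-metric. -/

import Mathlib

open Metric

/-- The polar transform (co-metric) of the Funk-type metric `F_a`. -/
noncomputable def FaStar (n : ℕ) (a : ℝ) (x y : EuclideanSpace ℝ (Fin n)) : ℝ :=
  (Real.sqrt ((1 - ‖x‖ ^ 2) * (1 - a ^ 2 * ‖x‖ ^ 2) * ‖y‖ ^ 2 -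
      (1 - a ^ 2) * (1 - ‖x‖ ^ 2) * (inner ℝ x y : ℝ) ^ 2) -
    a * (1 - ‖x‖ ^ 2) * (inner ℝ x y : ℝ)) / (1 - a ^ 2 * ‖x‖ ^ 2)

/-- The Klein co-metric `h_K^*(x;y) = (1-|x|²)(|y|² - ⟨x,y⟩²)`. -/
noncomputable def hKStar (n : ℕ) (x y : EuclideanSpace ℝ (Fin n)) : ℝ :=
  (1 - ‖x‖ ^ 2) * (‖y‖ ^ 2 - (inner ℝ x y : ℝ) ^ 2)

/-!
Writing `c = 1 - a²|x|²`, `u = a(1-|x|²)⟨x,y⟩` and `h = h_K^*(x;y)`, the radicand of `F_a^*` is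
`u² + c h`, so `F_a^*` is the larger root of `c z² + 2 u z = h`. Comparing a candidate `z ≥ 0`
with this root only needs the sign of `c z² + 2 u z - h`. Cauchy–Schwarz gives
`|u| ≤ a |x| √h`, and with this bound the sign is right at `z = √h / (1 + a)` (below the root)
and at `z = √h / (1 - a)` (above it), the margins being `a(1-|x|)(2 ± a(1-|x|))`.
-/

/-- The larger root of `c z² + 2 u z = D`. -/
noncomputable def quadRoot (c u D : ℝ) : ℝ :=
  (Real.sqrt (u ^ 2 + c * D) - u) / c

section quadRoot

variable {c u D z : ℝ}

theorem le_quadRoot (hc : 0 < c) (h : c * z ^ 2 + 2 * u * z ≤ D) : z ≤ quadRoot c u D := by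
  rw [quadRoot, le_div_iff₀ hc, le_sub_iff_add_le]
  calc z * c + u ≤ |z * c + u| := le_abs_self _
    _ ≤ Real.sqrt (u ^ 2 + c * D) := Real.abs_le_sqrt (by nlinarith)

theorem quadRoot_le (hc : 0 < c) (hz : 0 ≤ c * z + u) (h : D ≤ c * z ^ 2 + 2 * u * z) :
    quadRoot c u D ≤ z := by
  rw [quadRoot, div_le_iff₀ hc, sub_le_iff_le_add, Real.sqrt_le_left (by linarith)]
  nlinarith

end quadRoot

section FunkBounds

variable {a p w H : ℝ}

theorem one_sub_sq_mul_sq_pos (ha0 : 0 ≤ a) (ha1 : a < 1) (hp0 : 0 ≤ p) (hp1 : p ≤ 1) :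
    0 < 1 - a ^ 2 * p ^ 2 := by
  have hap : a * p < 1 := (mul_le_of_le_one_right ha0 hp1).trans_lt ha1
  nlinarith [mul_nonneg ha0 hp0]

theorem div_one_add_le_quadRoot (ha0 : 0 ≤ a) (ha1 : a < 1) (hp0 : 0 ≤ p) (hp1 : p ≤ 1)
    (hH : 0 ≤ H) (hw : |w| ≤ p * H) :
    H / (1 + a) ≤ quadRoot (1 - a ^ 2 * p ^ 2) (a * w) (H ^ 2) := by
  have hc := one_sub_sq_mul_sq_pos ha0 ha1 hp0 hp1
  have hwH : a * w * H ≤ a * p * H ^ 2 := by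
    nlinarith [mul_le_mul_of_nonneg_left (le_of_abs_le hw) (mul_nonneg ha0 hH)]
  have margin : 0 ≤ a * (1 - p) * (2 + a * (1 - p)) := by
    have : 0 ≤ a * (1 - p) := mul_nonneg ha0 (by linarith)
    positivity
  apply le_quadRoot hc
  rw [div_pow, ← sub_nonneg]
  have hk : 0 < 1 + a := by linarith
  have key : H ^ 2 - ((1 - a ^ 2 * p ^ 2) * (H ^ 2 / (1 + a) ^ 2) + 2 * (a * w) * (H / (1 + a)))
      = (a * (1 - p) * (2 + a * (1 - p)) * H ^ 2 + 2 * (1 + a) * (a * p * H ^ 2 - a * w * H))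
        / (1 + a) ^ 2 := by
    field_simp
    ring
  rw [key]
  have := mul_nonneg margin (sq_nonneg H)
  have : 0 ≤ 2 * (1 + a) * (a * p * H ^ 2 - a * w * H) := by
    apply mul_nonneg (by linarith); linarith
  positivity

theorem quadRoot_le_div_one_sub (ha0 : 0 ≤ a) (ha1 : a < 1) (hp0 : 0 ≤ p) (hp1 : p ≤ 1)
    (hH : 0 ≤ H) (hw : |w| ≤ p * H) :
    quadRoot (1 - a ^ 2 * p ^ 2) (a * w) (H ^ 2) ≤ H / (1 - a) := by
  have hc := one_sub_sq_mul_sq_pos ha0 ha1 hp0 hp1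
  have hk : 0 < 1 - a := by linarith
  have hwH : -(a * p * H) ≤ a * w := by
    nlinarith [mul_le_mul_of_nonneg_left (neg_le_of_abs_le hw) ha0]
  have margin : 0 ≤ a * (1 - p) * (2 - a * (1 - p)) := by
    have : a * (1 - p) ≤ a := mul_le_of_le_one_right ha0 (by linarith)
    exact mul_nonneg (mul_nonneg ha0 (by linarith)) (by linarith)
  apply quadRoot_le hc
  · have : 0 ≤ (1 - a ^ 2 * p ^ 2) * H + (1 - a) * (a * w) := by
      nlinarith [mul_le_mul_of_nonneg_left hwH hk.le, mul_nonneg hc.le hH,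
        mul_nonneg (mul_nonneg ha0 hp0) hH, mul_nonneg (mul_nonneg ha0 hp0) hk.le]
    calc 0 ≤ ((1 - a ^ 2 * p ^ 2) * H + (1 - a) * (a * w)) / (1 - a) := by positivity
      _ = (1 - a ^ 2 * p ^ 2) * (H / (1 - a)) + a * w := by field_simp
  · rw [div_pow, ← sub_nonneg]
    have key : (1 - a ^ 2 * p ^ 2) * (H ^ 2 / (1 - a) ^ 2) + 2 * (a * w) * (H / (1 - a)) - H ^ 2
        = (a * (1 - p) * (2 - a * (1 - p)) * H ^ 2 + 2 * (1 - a) * H * (a * w + a * p * H))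
          / (1 - a) ^ 2 := by
      field_simp
      ring
    rw [key]
    have := mul_nonneg margin (sq_nonneg H)
    have : 0 ≤ 2 * (1 - a) * H * (a * w + a * p * H) := by
      apply mul_nonneg (by positivity); linarith
    positivity

end FunkBounds

section Ball

variable {n : ℕ} {x : EuclideanSpace ℝ (Fin n)}

theorem FaStar_eq_quadRoot (a : ℝ) (y : EuclideanSpace ℝ (Fin n)) :
    FaStar n a x y = quadRoot (1 - a ^ 2 * ‖x‖ ^ 2) (a * ((1 - ‖x‖ ^ 2) * inner ℝ x y))
      (hKStar n x y) := by
  rw [FaStar, quadRoot, hKStar]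
  ring_nf

theorem sq_inner_le_sq_norm_mul_sq_norm (y : EuclideanSpace ℝ (Fin n)) :
    (inner ℝ x y : ℝ) ^ 2 ≤ ‖x‖ ^ 2 * ‖y‖ ^ 2 := by
  rw [← mul_pow, ← sq_abs]
  exact pow_le_pow_left₀ (abs_nonneg _) (abs_real_inner_le_norm x y) 2

theorem hKStar_nonneg (hx : ‖x‖ ≤ 1) (y : EuclideanSpace ℝ (Fin n)) : 0 ≤ hKStar n x y := by
  have := sq_inner_le_sq_norm_mul_sq_norm (x := x) y
  have : ‖x‖ ^ 2 ≤ 1 := pow_le_one₀ (norm_nonneg x) hx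
  apply mul_nonneg (by linarith)
  nlinarith [sq_nonneg ‖y‖]

theorem abs_mul_inner_le_norm_mul_sqrt_hKStar (hx : ‖x‖ ≤ 1) (y : EuclideanSpace ℝ (Fin n)) :
    |(1 - ‖x‖ ^ 2) * inner ℝ x y| ≤ ‖x‖ * Real.sqrt (hKStar n x y) := by
  apply abs_le_of_sq_le_sq _ (by positivity)
  rw [mul_pow ‖x‖, Real.sq_sqrt (hKStar_nonneg hx y), hKStar]
  have := sq_inner_le_sq_norm_mul_sq_norm (x := x) y
  have : 0 ≤ 1 - ‖x‖ ^ 2 := by nlinarith [norm_nonneg x]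
  nlinarith [mul_le_mul_of_nonneg_left this this]

end Ball

theorem stmt_5_general (n : ℕ) (a : ℝ) (ha : a ∈ Set.Ico (0 : ℝ) 1)
    (x : EuclideanSpace ℝ (Fin n)) (hx : x ∈ ball (0 : EuclideanSpace ℝ (Fin n)) 1)
    (y : EuclideanSpace ℝ (Fin n)) :
    (1 / (1 + a)) ^ 2 * hKStar n x y ≤ (FaStar n a x y) ^ 2 ∧
    (FaStar n a x y) ^ 2 ≤ (1 / (1 - a)) ^ 2 * hKStar n x y := by
  obtain ⟨ha0, ha1⟩ := ha
  have hx1 : ‖x‖ ≤ 1 := (mem_ball_zero_iff.mp hx).le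
  set H := Real.sqrt (hKStar n x y)
  have hH : 0 ≤ H := Real.sqrt_nonneg _
  have hH2 : hKStar n x y = H ^ 2 := (Real.sq_sqrt (hKStar_nonneg hx1 y)).symm
  have hw := abs_mul_inner_le_norm_mul_sqrt_hKStar hx1 y
  have lower := div_one_add_le_quadRoot ha0 ha1 (norm_nonneg x) hx1 hH hw
  have upper := quadRoot_le_div_one_sub ha0 ha1 (norm_nonneg x) hx1 hH hw
  rw [FaStar_eq_quadRoot, hH2]
  have hpos : 0 ≤ H / (1 + a) := by positivity
  constructor
  · calc (1 / (1 + a)) ^ 2 * H ^ 2 = (H / (1 + a)) ^ 2 := by ring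
      _ ≤ _ := pow_le_pow_left₀ hpos lower 2
  · calc _ ≤ (H / (1 - a)) ^ 2 := pow_le_pow_left₀ (hpos.trans lower) upper 2
      _ = (1 / (1 - a)) ^ 2 * H ^ 2 := by ring

theorem stmt_5 (n : ℕ) (hn : 2 ≤ n) (a : ℝ) (ha : a ∈ Set.Ico (0 : ℝ) 1)
    (x : EuclideanSpace ℝ (Fin n)) (hx : x ∈ ball (0 : EuclideanSpace ℝ (Fin n)) 1)
    (y : EuclideanSpace ℝ (Fin n)) :
    (1 / (1 + a)) ^ 2 * hKStar n x y ≤ (FaStar n a x y) ^ 2 ∧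
    (FaStar n a x y) ^ 2 ≤ (1 / (1 - a)) ^ 2 * hKStar n x y :=
  stmt_5_general n a ha x hx y
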